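/- arXiv:1906.11320 — 6 statements merged into one kernel-verified Lean document; each statement's English description precedes it below -/
import Mathlib

section
/- For every n, r ≥ 1 and every x ∈ ℝ, the blocks B_{n,r}^{(k)}(x) composing the matrix X_n^{(r)}(x) (its k-th group of n+1 consecutive columns) are given by B_{n,r}^{(k)}(x) = x^{γ_{n,r}^{(k)}} · X_n^{(1)}(x), where the exponent is given explicitly by γ_{n,r}^{(k)} = Σ_{j=0}^{r-1} ((k-1) mod (n+1)^{r-j}) div (n+1)^{r-1-j} for k = 1, …, (n+1)^{r-1}, where mod denotes the remainder and div the integer quotient; in particular γ_{n,r}^{(k)} ∈ {0,…,(r-1)n}. -/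
open Matrix MeasureTheory

namespace Correlators

lemma pos_left {a b k : ℕ} (h : k < a * b) : 0 < a := by
  rcases Nat.eq_zero_or_pos a with rfl | h'
  · simp at h
  · exact h'

lemma pos_right {a b k : ℕ} (h : k < a * b) : 0 < b := by
  rcases Nat.eq_zero_or_pos b with rfl | h'
  · simp at h
  · exact h'

lemma div_lt_left {a c k : ℕ} (h : k < a * c) : k / c < a :=
  Nat.div_lt_of_lt_mul (by rwa [Nat.mul_comm] at h)

lemma unvec_idx {p q : ℕ} (i : Fin p) (j : Fin q) : j.1 * p + i.1 < p * q :=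
  calc j.1 * p + i.1 < j.1 * p + p := Nat.add_lt_add_left i.2 _
    _ = (j.1 + 1) * p := by ring
    _ ≤ q * p := Nat.mul_le_mul_right p j.2
    _ = p * q := Nat.mul_comm q p

/-- `H_N(x) = (1, x, x², …, x^N)ᵀ ∈ ℝ^{N+1}`, the monomial basis vector. -/
def Hmon (N : ℕ) (x : ℝ) : Fin (N + 1) → ℝ := fun i => x ^ (i : ℕ)

/-- Vectorization of a matrix: stacks the columns, `vec(A)_{n(j-1)+i} = A_{i,j}` (1-based). -/
def vec {n m : ℕ} (A : Matrix (Fin n) (Fin m) ℝ) : Fin (n * m) → ℝ :=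
  fun k => A ⟨k.1 % n, Nat.mod_lt _ (pos_left k.2)⟩ ⟨k.1 / n, Nat.div_lt_of_lt_mul k.2⟩

/-- Inverse vectorization: `unvec w` is the `p × q` matrix `B` with `B_{i,j} = w_{p(j-1)+i}`. -/
def unvec {p q : ℕ} (w : Fin (p * q) → ℝ) : Matrix (Fin p) (Fin q) ℝ :=
  Matrix.of fun i j => w ⟨j.1 * p + i.1, unvec_idx i j⟩

/-- L-vectorization: the first column of `A` followed by the last row of `A`. -/
def vecL {n m : ℕ} (A : Matrix (Fin n) (Fin m) ℝ) : Fin (n + m - 1) → ℝ :=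
  fun k =>
    if h : k.1 < n then
      if hm : 0 < m then A ⟨k.1, h⟩ ⟨0, hm⟩ else 0
    else
      if hn : 0 < n then
        A ⟨n - 1, Nat.sub_lt hn Nat.one_pos⟩ ⟨k.1 - n + 1, by have hk := k.2; omega⟩
      else 0

/-- A matrix is Hankel if its entries are constant along skew-diagonals. -/
def IsHankel {n m : ℕ} (A : Matrix (Fin n) (Fin m) ℝ) : Prop :=
  ∀ (i i' : Fin n) (j j' : Fin m), i.1 + j.1 = i'.1 + j'.1 → A i j = A i' j'

/-- Kronecker product of matrices, with flattened `Fin` indices: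
`(A ⊗ B)_{(i-1)c+p,(j-1)d+q} = A_{i,j} B_{p,q}` (1-based). -/
def kron {a b c d : ℕ} (A : Matrix (Fin a) (Fin b) ℝ) (B : Matrix (Fin c) (Fin d) ℝ) :
    Matrix (Fin (a * c)) (Fin (b * d)) ℝ :=
  Matrix.of fun i j =>
    A ⟨i.1 / c, div_lt_left i.2⟩ ⟨j.1 / d, div_lt_left j.2⟩ *
      B ⟨i.1 % c, Nat.mod_lt _ (pos_right i.2)⟩ ⟨j.1 % d, Nat.mod_lt _ (pos_right j.2)⟩

/-- Kronecker product of (column) vectors: `(u ⊗ v)_{(i-1)b+j} = u_i v_j` (1-based). -/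
def vkron {a b : ℕ} (u : Fin a → ℝ) (v : Fin b → ℝ) : Fin (a * b) → ℝ :=
  fun k => u ⟨k.1 / b, div_lt_left k.2⟩ * v ⟨k.1 % b, Nat.mod_lt _ (pos_right k.2)⟩

/-- Kronecker power of a vector: `u^{⊗0} = 1`, `u^{⊗(r+1)} = u^{⊗r} ⊗ u`. -/
def vkronPow {a : ℕ} (u : Fin a → ℝ) : (r : ℕ) → Fin (a ^ r) → ℝ
  | 0 => fun _ => 1
  | r + 1 => fun k => vkron (vkronPow u r) u (Fin.cast (pow_succ a r) k)

/-- A vector viewed as a one-row matrix (its transpose as a column vector). -/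
def rowOf {N : ℕ} (u : Fin N → ℝ) : Matrix (Fin 1) (Fin N) ℝ := Matrix.of fun _ j => u j

/-- A vector viewed as a one-column matrix. -/
def colOf {N : ℕ} (u : Fin N → ℝ) : Matrix (Fin N) (Fin 1) ℝ := Matrix.of fun i _ => u i

/-- Kronecker power of a matrix. -/
def mkronPow {a b : ℕ} (A : Matrix (Fin a) (Fin b) ℝ) :
    (r : ℕ) → Matrix (Fin (a ^ r)) (Fin (b ^ r)) ℝ
  | 0 => Matrix.of fun _ _ => (1 : ℝ)
  | r + 1 =>
      (kron (mkronPow A r) A).submatrix (Fin.cast (pow_succ a r)) (Fin.cast (pow_succ b r))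

/-- `X_n^{(r)}(x) := H_n(x)ᵀ ⊗^r H_n(x) = (H_n(x)ᵀ)^{⊗r} ⊗ H_n(x)`,
a matrix in `ℝ^{(n+1) × (n+1)^r}`. -/
def Xmat (n r : ℕ) (x : ℝ) : Matrix (Fin (n + 1)) (Fin ((n + 1) ^ r)) ℝ :=
  (kron (mkronPow (rowOf (Hmon n x)) r) (colOf (Hmon n x))).submatrix
    (Fin.cast (by simp)) (Fin.cast (by simp))

/-- The L-eliminating matrix
`E_{n,m} = ∑_{i=1}^n e_{n+m-1,i} ⊗ e_{m,1}ᵀ ⊗ e_{n,i}ᵀ + ∑_{i=2}^m e_{n+m-1,n+i-1} ⊗ e_{m,i}ᵀ ⊗ e_{n,n}ᵀ`,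
written entrywise: the `i`-th summand of the first sum is the matrix with a single `1` in
(1-based) position `(i, i)`, and the `i`-th summand of the second sum has its single `1` in
position `(n+i-1, n·i)`. -/
def Emat (n m : ℕ) : Matrix (Fin (n + m - 1)) (Fin (n * m)) ℝ :=
  Matrix.of fun r c =>
    (∑ i ∈ Finset.range n, if r.1 = i ∧ c.1 = i then (1 : ℝ) else 0) +
    (∑ i ∈ Finset.Icc 2 m, if r.1 = n + i - 2 ∧ c.1 + 1 = n * i then (1 : ℝ) else 0)

/-- The L-duplicating matrix `D_{n,m} = ∑_{i=1}^n ∑_{j=1}^m e_{n+m-1,i+j-1}ᵀ ⊗ e_{m,j} ⊗ e_{n,i}`,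
written entrywise: the `(i,j)` summand is the matrix with a single `1` in (1-based) position
`(n(j-1)+i, i+j-1)`. -/
def Dmat (n m : ℕ) : Matrix (Fin (n * m)) (Fin (n + m - 1)) ℝ :=
  Matrix.of fun r c =>
    ∑ i ∈ Finset.range n, ∑ j ∈ Finset.range m,
      if r.1 = n * j + i ∧ c.1 = i + j then (1 : ℝ) else 0

lemma arA (n : ℕ) : n * (0 + 2) + 1 = (n + 1) + (n + 1) - 1 := by omega

lemma arB (n : ℕ) : (n + 1) ^ (0 + 2) = (n + 1) * (n + 1) := by ring

lemma arC (n k : ℕ) : (n * (k + 2) + 1) * (n + 1) = (n + 1) * (n * (k + 2) + 1) :=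
  Nat.mul_comm _ _

lemma arD (n k : ℕ) : n * (k + 1 + 2) + 1 = n * (k + 2) + 1 + (n + 1) - 1 := by
  rw [Nat.add_sub_assoc (Nat.le_add_left 1 n), Nat.add_sub_cancel]
  ring

lemma arE (n k : ℕ) : (n + 1) ^ (k + 1 + 2) = (n + 1) * (n + 1) ^ (k + 2) := by ring

/-- The iterated L-eliminating matrices `E_{n+1}^{(m)}` (here indexed by `k := m - 1`):
`E_{n+1}^{(1)} = E_{n+1,n+1}` and `E_{n+1}^{(m)} = E_{nm+1,n+1} · (I_{n+1} ⊗ E_{n+1}^{(m-1)})`. -/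
def EL (n : ℕ) : (k : ℕ) → Matrix (Fin (n * (k + 2) + 1)) (Fin ((n + 1) ^ (k + 2))) ℝ
  | 0 => (Emat (n + 1) (n + 1)).submatrix (Fin.cast (arA n)) (Fin.cast (arB n))
  | k + 1 =>
      (Emat (n * (k + 2) + 1) (n + 1) *
        (kron (1 : Matrix (Fin (n + 1)) (Fin (n + 1)) ℝ) (EL n k)).submatrix
          (Fin.cast (arC n k)) id).submatrix
        (Fin.cast (arD n k)) (Fin.cast (arE n k))

/-- The iterated L-duplicating matrices `D_{n+1}^{(m)}` (here indexed by `k := m - 1`):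
`D_{n+1}^{(1)} = D_{n+1,n+1}` and `D_{n+1}^{(m)} = (I_{n+1} ⊗ D_{n+1}^{(m-1)}) · D_{nm+1,n+1}`. -/
def DL (n : ℕ) : (k : ℕ) → Matrix (Fin ((n + 1) ^ (k + 2))) (Fin (n * (k + 2) + 1)) ℝ
  | 0 => (Dmat (n + 1) (n + 1)).submatrix (Fin.cast (arB n)) (Fin.cast (arA n))
  | k + 1 =>
      ((kron (1 : Matrix (Fin (n + 1)) (Fin (n + 1)) ℝ) (DL n k)).submatrix
          id (Fin.cast (arC n k)) * Dmat (n * (k + 2) + 1) (n + 1)).submatrix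
        (Fin.cast (arE n k)) (Fin.cast (arD n k))

/-- The exponent `γ_{n,r}^{(k)} = ∑_{j=0}^{r-1} ((k-1) mod (n+1)^{r-j}) div (n+1)^{r-1-j}`
(`k` is 1-based). -/
def gamExp (n r k : ℕ) : ℕ :=
  ∑ j ∈ Finset.range r, ((k - 1) % (n + 1) ^ (r - j)) / (n + 1) ^ (r - 1 - j)

/-- Entry `(p, q)` (0-based) of the generator matrix of a polynomial jump-diffusion with
drift `b₀ + b₁ x`, squared diffusion `σ₀ + σ₁ x + σ₂ x²`, and jump moments
`∫ z^m ℓ(x,dz) = ∑_{i=0}^m ξ_i^m x^i` (`ξ m i` denotes `ξ_i^m`), with respect to the monomial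
basis. -/
noncomputable def genEntry (b₀ b₁ σ₀ σ₁ σ₂ : ℝ) (ξ : ℕ → ℕ → ℝ) (p q : ℕ) : ℝ :=
  if q = p then
    (p : ℝ) * b₁ + (1 / 2) * (p : ℝ) * ((p : ℝ) - 1) * σ₂ +
      ∑ k ∈ Finset.Icc 2 p, (p.choose k : ℝ) * ξ k k
  else if q + 1 = p then
    (p : ℝ) * b₀ + (1 / 2) * (p : ℝ) * ((p : ℝ) - 1) * σ₁ +
      ∑ k ∈ Finset.Icc 2 p, (p.choose k : ℝ) * ξ k (k - 1)
  else if q + 2 = p then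
    (1 / 2) * (p : ℝ) * ((p : ℝ) - 1) * σ₀ +
      ∑ k ∈ Finset.Icc 2 p, (p.choose k : ℝ) * ξ k (k - 2)
  else if q + 2 < p then
    ∑ k ∈ Finset.Icc (p - q) p, (p.choose k : ℝ) * ξ k (k - (p - q))
  else 0

/-- The generator matrix `G_n` of a polynomial jump-diffusion w.r.t. the monomial basis. -/
noncomputable def genMat (b₀ b₁ σ₀ σ₁ σ₂ : ℝ) (ξ : ℕ → ℕ → ℝ) (n : ℕ) :
    Matrix (Fin (n + 1)) (Fin (n + 1)) ℝ :=
  Matrix.of fun p q => genEntry b₀ b₁ σ₀ σ₁ σ₂ ξ p.1 q.1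


/-- Digit sum of `m` in base `n+1`, using `r` digits. -/
def dS (n r m : ℕ) : ℕ := ∑ t ∈ Finset.range r, m / (n + 1) ^ t % (n + 1)

lemma dS_succ (n r m : ℕ) : dS n (r + 1) m = m % (n + 1) + dS n r (m / (n + 1)) := by
  unfold dS
  rw [Finset.sum_range_succ']
  simp only [pow_zero, Nat.div_one, pow_succ']
  rw [Nat.add_comm]
  congr 1
  refine Finset.sum_congr rfl fun t _ => ?_
  rw [Nat.div_div_eq_div_mul]

lemma dS_top (n r m : ℕ) (hm : m < (n + 1) ^ r) : dS n (r + 1) m = dS n r m := by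
  unfold dS
  rw [Finset.sum_range_succ, Nat.div_eq_of_lt hm]
  simp

lemma mkron_row (n r : ℕ) (x : ℝ) (i : Fin (1 ^ r)) (j : Fin ((n + 1) ^ r)) :
    mkronPow (rowOf (Hmon n x)) r i j = x ^ dS n r j.1 := by
  induction r with
  | zero =>
    have : j.1 = 0 := Nat.lt_one_iff.mp (by simpa using j.2)
    simp [mkronPow, dS, this]
    rfl
  | succ r ih =>
    show kron (mkronPow (rowOf (Hmon n x)) r) (rowOf (Hmon n x)) _ _ = _
    rw [kron]
    erw [Matrix.of_apply]
    rw [ih]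
    simp only [rowOf, Matrix.of_apply, Hmon, Fin.coe_cast]
    rw [← pow_add, dS_succ, Nat.add_comm]

lemma gamExp_eq_dS (n r k : ℕ) (hr : 1 ≤ r) : gamExp n r k = dS n r (k - 1) := by
  unfold gamExp dS
  rw [← Finset.sum_range_reflect]
  refine Finset.sum_congr rfl fun t ht => ?_
  have ht' : t < r := Finset.mem_range.mp ht
  have h1 : r - (r - 1 - t) = t + 1 := by omega
  have h2 : r - 1 - (r - 1 - t) = t := by omega
  rw [h1, h2, pow_succ, Nat.mod_mul_right_div_self]

lemma dS_le (n r m : ℕ) : dS n r m ≤ r * n := by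
  unfold dS
  calc ∑ t ∈ Finset.range r, m / (n + 1) ^ t % (n + 1)
      ≤ ∑ _t ∈ Finset.range r, n := Finset.sum_le_sum fun t _ => by
        exact Nat.le_of_lt_succ (Nat.mod_lt _ (by omega))
    _ = r * n := by simp [Nat.mul_comm]

lemma block_idx {n r k : ℕ} (hr : 1 ≤ r) (hk1 : 1 ≤ k) (hk2 : k ≤ (n + 1) ^ (r - 1))
    (c : Fin (n + 1)) : (k - 1) * (n + 1) + c.1 < (n + 1) ^ r := by
  have hc := c.2
  have h1 : (k - 1 + 1) * (n + 1) ≤ (n + 1) ^ (r - 1) * (n + 1) :=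
    Nat.mul_le_mul_right (n + 1) (by omega)
  have h2 : (n + 1) ^ (r - 1) * (n + 1) = (n + 1) ^ r := by
    rw [← pow_succ]
    congr 1
    omega
  have h3 : (k - 1) * (n + 1) + c.1 < (k - 1 + 1) * (n + 1) := by
    rw [Nat.add_mul]
    omega
  omega
/-- For every `n, r ≥ 1` and `x ∈ ℝ`, the `k`-th block `B_{n,r}^{(k)}(x)` of
`X_n^{(r)}(x)` (its `k`-th group of `n+1` consecutive columns) equals
`x^{γ_{n,r}^{(k)}} · X_n^{(1)}(x)`, where
`γ_{n,r}^{(k)} = ∑_{j=0}^{r-1} ((k-1) mod (n+1)^{r-j}) div (n+1)^{r-1-j}` for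
`k = 1, …, (n+1)^{r-1}`; in particular `γ_{n,r}^{(k)} ∈ {0,…,(r-1)n}`. -/
theorem stmt6 (n r : ℕ) (hn : 1 ≤ n) (hr : 1 ≤ r) (x : ℝ)
    (k : ℕ) (hk1 : 1 ≤ k) (hk2 : k ≤ (n + 1) ^ (r - 1)) :
    (Matrix.of fun (i c : Fin (n + 1)) =>
        Xmat n r x i ⟨(k - 1) * (n + 1) + c.1, block_idx hr hk1 hk2 c⟩)
      = x ^ gamExp n r k • Matrix.vecMulVec (Hmon n x) (Hmon n x) ∧
    gamExp n r k ≤ (r - 1) * n := by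
  obtain ⟨s, rfl⟩ : ∃ s, r = s + 1 := ⟨r - 1, by omega⟩
  have hs : s + 1 - 1 = s := rfl
  rw [hs] at hk2
  have hk' : k - 1 < (n + 1) ^ s := by omega
  have hgam : gamExp n (s + 1) k = dS n s (k - 1) := by
    rw [gamExp_eq_dS n (s + 1) k (by omega), dS_top n s (k - 1) hk']
  constructor
  · ext i c
    have hmod : ((k - 1) * (n + 1) + c.1) % (n + 1) = c.1 := by
      rw [Nat.mul_add_mod', Nat.mod_eq_of_lt c.2]
    have hdiv : ((k - 1) * (n + 1) + c.1) / (n + 1) = k - 1 := by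
      rw [Nat.add_comm, Nat.add_mul_div_right _ _ (Nat.succ_pos n), Nat.div_eq_of_lt c.2, Nat.zero_add]
    show (kron (mkronPow (rowOf (Hmon n x)) (s + 1)) (colOf (Hmon n x))) _ _ = _
    rw [kron]
    simp only [Matrix.of_apply, Fin.coe_cast]
    rw [mkron_row]
    simp only [colOf, Matrix.of_apply, Hmon, Nat.div_one, Nat.mod_eq_of_lt i.2]
    rw [dS_succ, hmod, hdiv]
    simp only [Matrix.smul_apply, Matrix.vecMulVec_apply, Hmon, smul_eq_mul, hgam]
    rw [← pow_add, ← pow_add, ← pow_add]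
    ring_nf
  · rw [hgam, hs]
    exact dS_le n s (k - 1)

end Correlators
end

section
/- For every n, m ≥ 1 and every x ∈ ℝ, the L-eliminating matrix E_{nm+1,n+1} and the L-duplicating matrix D_{nm+1,n+1} satisfy E_{nm+1,n+1} · (H_n(x) ⊗ H_{nm}(x)) = H_{n(m+1)}(x) and D_{nm+1,n+1} · H_{n(m+1)}(x) = H_n(x) ⊗ H_{nm}(x). -/
open Matrix MeasureTheory

namespace Correlators

lemma Emat_apply {N M : ℕ} (hN : 1 ≤ N) (r : Fin (N + M - 1)) (c : Fin (N * M)) :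
    Emat N M r c =
      if (r.1 < N ∧ c.1 = r.1) ∨ (N ≤ r.1 ∧ c.1 + 1 = N * (r.1 + 2 - N)) then 1 else 0 := by
  have hr := r.2
  unfold Emat
  simp only [Matrix.of_apply]
  have hA : (∑ i ∈ Finset.range N, if r.1 = i ∧ c.1 = i then (1 : ℝ) else 0)
      = if r.1 < N ∧ c.1 = r.1 then 1 else 0 := by
    split_ifs with h
    · rw [Finset.sum_eq_single_of_mem r.1 (Finset.mem_range.2 h.1)]
      · rw [if_pos ⟨rfl, h.2⟩]
      · intro b _ hb
        rw [if_neg]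
        rintro ⟨h1, _⟩
        exact hb h1.symm
    · apply Finset.sum_eq_zero
      intro i hi
      rw [if_neg]
      rintro ⟨h1, h2⟩
      have := Finset.mem_range.1 hi
      exact h ⟨by omega, by omega⟩
  have hB : (∑ i ∈ Finset.Icc 2 M, if r.1 = N + i - 2 ∧ c.1 + 1 = N * i then (1 : ℝ) else 0)
      = if N ≤ r.1 ∧ c.1 + 1 = N * (r.1 + 2 - N) then 1 else 0 := by
    split_ifs with h
    · rw [Finset.sum_eq_single_of_mem (r.1 + 2 - N) (Finset.mem_Icc.2 ⟨by omega, by omega⟩)]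
      · rw [if_pos ⟨by omega, h.2⟩]
      · intro b hb hbne
        rw [if_neg]
        rintro ⟨h1, _⟩
        have := Finset.mem_Icc.1 hb
        exact hbne (by omega)
    · apply Finset.sum_eq_zero
      intro i hi
      rw [if_neg]
      rintro ⟨h1, h2⟩
      have hmem := Finset.mem_Icc.1 hi
      apply h
      refine ⟨by omega, ?_⟩
      have hieq : i = r.1 + 2 - N := by omega
      rw [← hieq]
      exact h2
  rw [hA, hB]
  by_cases h1 : r.1 < N ∧ c.1 = r.1 <;> by_cases h2 : N ≤ r.1 ∧ c.1 + 1 = N * (r.1 + 2 - N) <;>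
    simp [h1, h2] <;> omega

lemma Dmat_apply {N M : ℕ} (r : Fin (N * M)) (c : Fin (N + M - 1)) :
    Dmat N M r c = if c.1 = r.1 % N + r.1 / N then 1 else 0 := by
  have hN : 0 < N := pos_left r.2
  have hi : r.1 % N < N := Nat.mod_lt _ hN
  have hj : r.1 / N < M := Nat.div_lt_of_lt_mul r.2
  unfold Dmat
  simp only [Matrix.of_apply]
  rw [Finset.sum_eq_single_of_mem (r.1 % N) (Finset.mem_range.2 hi)]
  · rw [Finset.sum_eq_single_of_mem (r.1 / N) (Finset.mem_range.2 hj)]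
    · rw [Nat.div_add_mod]
      simp
    · intro b _ hb
      rw [if_neg]
      rintro ⟨h1, _⟩
      apply hb
      have : r.1 / N = b := by
        rw [h1, Nat.mul_add_div hN, Nat.div_eq_of_lt hi, Nat.add_zero]
      exact this.symm
  · intro b hb hbne
    apply Finset.sum_eq_zero
    intro j _
    rw [if_neg]
    rintro ⟨h1, _⟩
    apply hbne
    have hbN : b < N := Finset.mem_range.1 hb
    have : (N * j + b) % N = b % N := Nat.mul_add_mod _ _ _
    rw [Nat.mod_eq_of_lt hbN] at this
    rw [h1, this]

/-- For every `n, m ≥ 1` and `x ∈ ℝ`,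
`E_{nm+1,n+1} · (H_n(x) ⊗ H_{nm}(x)) = H_{n(m+1)}(x)` and
`D_{nm+1,n+1} · H_{n(m+1)}(x) = H_n(x) ⊗ H_{nm}(x)`. -/
theorem stmt9 (n m : ℕ) (hn : 1 ≤ n) (hm : 1 ≤ m) (x : ℝ) :
    (Emat (n * m + 1) (n + 1) *ᵥ
        fun j : Fin ((n * m + 1) * (n + 1)) =>
          vkron (Hmon n x) (Hmon (n * m) x) (Fin.cast (by ring) j))
      = (fun i => Hmon (n * (m + 1)) x
          (Fin.cast (by rw [Nat.mul_succ]; omega) i)) ∧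
    (Dmat (n * m + 1) (n + 1) *ᵥ
        fun i : Fin ((n * m + 1) + (n + 1) - 1) =>
          Hmon (n * (m + 1)) x (Fin.cast (by rw [Nat.mul_succ]; omega) i))
      = fun j : Fin ((n * m + 1) * (n + 1)) =>
          vkron (Hmon n x) (Hmon (n * m) x) (Fin.cast (by ring) j) := by
  constructor
  · funext r
    have hr := r.2
    simp only [Matrix.mulVec, dotProduct]
    by_cases h : r.1 < n * m + 1
    · have hc0 : r.1 < (n * m + 1) * (n + 1) :=
        lt_of_lt_of_le h (Nat.le_mul_of_pos_right _ (by omega))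
      rw [Finset.sum_eq_single (⟨r.1, hc0⟩ : Fin ((n * m + 1) * (n + 1)))]
      · rw [Emat_apply (by omega), if_pos (Or.inl ⟨h, rfl⟩), one_mul]
        show Hmon n x _ * Hmon (n * m) x _ = _
        unfold Hmon
        simp only [Fin.coe_cast]
        rw [← pow_add]
        congr 1
        show r.1 / (n * m + 1) + r.1 % (n * m + 1) = r.1
        rw [Nat.div_eq_of_lt h, Nat.mod_eq_of_lt h]
        omega
      · intro b _ hb
        rw [Emat_apply (by omega), if_neg, zero_mul]
        rintro (⟨h1, h2⟩ | ⟨h1, h2⟩)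
        · exact hb (Fin.ext h2)
        · omega
      · intro habs
        exact absurd (Finset.mem_univ _) habs
    · have h2i : 2 ≤ r.1 + 2 - (n * m + 1) := by omega
      have hiM : r.1 + 2 - (n * m + 1) ≤ n + 1 := by omega
      have hmul : (n * m + 1) * (r.1 + 2 - (n * m + 1))
          = (n * m + 1) * (r.1 + 2 - (n * m + 1) - 1) + (n * m + 1) := by
        rw [← Nat.mul_succ]
        congr 1
        omega
      have hc0 : (n * m + 1) * (r.1 + 2 - (n * m + 1)) - 1 < (n * m + 1) * (n + 1) := by
        have := Nat.mul_le_mul_left (n * m + 1) hiM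
        omega
      rw [Finset.sum_eq_single
          (⟨(n * m + 1) * (r.1 + 2 - (n * m + 1)) - 1, hc0⟩ : Fin ((n * m + 1) * (n + 1)))]
      · rw [Emat_apply (by omega), if_pos (Or.inr ⟨by omega,
          show (n * m + 1) * (r.1 + 2 - (n * m + 1)) - 1 + 1
            = (n * m + 1) * (r.1 + 2 - (n * m + 1)) by omega⟩), one_mul]
        show Hmon n x _ * Hmon (n * m) x _ = _
        unfold Hmon
        simp only [Fin.coe_cast]
        rw [← pow_add]
        congr 1
        show ((n * m + 1) * (r.1 + 2 - (n * m + 1)) - 1) / (n * m + 1)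
            + ((n * m + 1) * (r.1 + 2 - (n * m + 1)) - 1) % (n * m + 1) = r.1
        have hval : (n * m + 1) * (r.1 + 2 - (n * m + 1)) - 1
            = (n * m + 1) * (r.1 + 2 - (n * m + 1) - 1) + n * m := by omega
        rw [hval, Nat.mul_add_div (by omega), Nat.mul_add_mod,
          Nat.div_eq_of_lt (by omega), Nat.mod_eq_of_lt (by omega)]
        omega
      · intro b _ hb
        rw [Emat_apply (by omega), if_neg, zero_mul]
        rintro (⟨h1, h2⟩ | ⟨h1, h2⟩)
        · omega
        · exact hb (Fin.ext
            (show b.1 = (n * m + 1) * (r.1 + 2 - (n * m + 1)) - 1 by omega))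
      · intro habs
        exact absurd (Finset.mem_univ _) habs
  · funext r
    have hr := r.2
    simp only [Matrix.mulVec, dotProduct]
    have hN : 0 < n * m + 1 := by omega
    have hi : r.1 % (n * m + 1) < n * m + 1 := Nat.mod_lt _ hN
    have hj : r.1 / (n * m + 1) < n + 1 := Nat.div_lt_of_lt_mul r.2
    have hc0 : r.1 % (n * m + 1) + r.1 / (n * m + 1) < (n * m + 1) + (n + 1) - 1 := by omega
    rw [Finset.sum_eq_single
        (⟨r.1 % (n * m + 1) + r.1 / (n * m + 1), hc0⟩ : Fin ((n * m + 1) + (n + 1) - 1))]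
    · rw [Dmat_apply, if_pos rfl, one_mul]
      show Hmon (n * (m + 1)) x _ = Hmon n x _ * Hmon (n * m) x _
      unfold Hmon
      simp only [Fin.coe_cast]
      rw [← pow_add]
      congr 1
      omega
    · intro b _ hb
      rw [Dmat_apply, if_neg, zero_mul]
      intro hc
      exact hb (Fin.ext hc)
    · intro habs
      exact absurd (Finset.mem_univ _) habs

end Correlators
end

section
/- For every n, m ≥ 1, the m-th L-eliminating matrix E_{n+1}^{(m)} ∈ ℝ^{(n(m+1)+1)×(n+1)^{m+1}}, defined by the recursion E_{n+1}^{(1)} := E_{n+1,n+1} and E_{n+1}^{(m)} := E_{nm+1,n+1}·(I_{n+1} ⊗ E_{n+1}^{(m-1)}) for m ≥ 2, satisfies E_{n+1}^{(m)} · vec(X_n^{(m)}(x)) = H_{n(m+1)}(x) for every x ∈ ℝ. -/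
open Matrix MeasureTheory

namespace Correlators

/-! ### Auxiliary lemmas for Statement 10 -/

/-- Base-(n+1) digit sum using the lowest `r` digits. -/
def dsum (n : ℕ) : ℕ → ℕ → ℕ
  | 0, _ => 0
  | r + 1, j => j % (n + 1) + dsum n r (j / (n + 1))

lemma dsum_split (n : ℕ) : ∀ r b j, j < (n + 1) ^ r →
    dsum n (r + 1) (b * (n + 1) ^ r + j) = b % (n + 1) + dsum n r j := by
  intro r
  induction r with
  | zero =>
    intro b j hj
    have hj0 : j = 0 := Nat.lt_one_iff.mp (by simpa using hj)
    subst hj0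
    simp [dsum]
  | succ r ih =>
    intro b j hj
    have h1 : (b * (n + 1) ^ (r + 1) + j) % (n + 1) = j % (n + 1) := by
      rw [pow_succ, ← Nat.mul_assoc, Nat.mul_comm (b * (n+1)^r) (n+1), Nat.mul_add_mod]
    have h2 : (b * (n + 1) ^ (r + 1) + j) / (n + 1) = b * (n + 1) ^ r + j / (n + 1) := by
      rw [pow_succ, ← Nat.mul_assoc, Nat.add_comm, Nat.add_mul_div_right _ _ (Nat.succ_pos n),
        Nat.add_comm]
    have hj' : j / (n + 1) < (n + 1) ^ r := by
      apply Nat.div_lt_of_lt_mul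
      rwa [Nat.mul_comm, ← pow_succ]
    show (b * (n+1)^(r+1) + j) % (n+1) + dsum n (r+1) ((b * (n+1)^(r+1) + j) / (n+1)) = _
    rw [h1, h2, ih b _ hj']
    show _ = b % (n+1) + (j % (n+1) + dsum n r (j / (n+1)))
    omega

lemma dsum_succ (n r j : ℕ) :
    dsum n (r + 1) j = j % (n + 1) + dsum n r (j / (n + 1)) := rfl

lemma sum_hot {K : ℕ} (g : ℕ → ℝ) (P : Prop) [Decidable P] (t : ℕ) :
    (∑ c : Fin K, if P ∧ c.1 = t then g c.1 else 0) = if P ∧ t < K then g t else 0 := by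
  by_cases hP : P
  · by_cases ht : t < K
    · rw [if_pos ⟨hP, ht⟩, Finset.sum_eq_single_of_mem ⟨t, ht⟩ (Finset.mem_univ _)]
      · simp [hP]
      · intro c _ hc
        rw [if_neg]
        rintro ⟨-, hct⟩
        exact hc (Fin.ext hct)
    · rw [if_neg (by tauto), Finset.sum_eq_zero]
      intro c _
      rw [if_neg]
      rintro ⟨-, hct⟩
      exact ht (hct ▸ c.2)
  · rw [if_neg (by tauto), Finset.sum_eq_zero]
    intro c _
    rw [if_neg (by tauto)]

lemma Emat_hankel {N m : ℕ} (hN : 1 ≤ N) (hm : 1 ≤ m) (x : ℝ)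
    (v : Fin (N * m) → ℝ) (hv : ∀ c, v c = x ^ (c.1 % N + c.1 / N)) (r : Fin (N + m - 1)) :
    (Emat N m *ᵥ v) r = x ^ r.1 := by
  have hr := r.2
  simp only [Matrix.mulVec, dotProduct, Emat, Matrix.of_apply, add_mul,
    Finset.sum_add_distrib, ite_mul, one_mul, zero_mul, Finset.sum_mul]
  rw [Finset.sum_comm (s := Finset.univ) (t := Finset.range N),
    Finset.sum_comm (s := Finset.univ) (t := Finset.Icc 2 m)]
  have e1 : ∀ i ∈ Finset.range N,
      (∑ c : Fin (N * m), if r.1 = i ∧ c.1 = i then v c else 0)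
        = if r.1 = i ∧ i < N * m then x ^ (i % N + i / N) else 0 := by
    intro i _
    rw [← sum_hot (fun t => x ^ (t % N + t / N)) (r.1 = i) i]
    refine Finset.sum_congr rfl fun c _ => ?_
    split_ifs with h
    · rw [hv c, h.2]
    · rfl
  have e2 : ∀ i ∈ Finset.Icc 2 m,
      (∑ c : Fin (N * m), if r.1 = N + i - 2 ∧ c.1 + 1 = N * i then v c else 0)
        = if r.1 = N + i - 2 ∧ N * i - 1 < N * m then x ^ ((N * i - 1) % N + (N * i - 1) / N)
          else 0 := by
    intro i hi
    have hi2 : 2 ≤ i := (Finset.mem_Icc.mp hi).1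
    have hpos : 1 ≤ N * i := Nat.one_le_iff_ne_zero.mpr (Nat.mul_ne_zero (by omega) (by omega))
    rw [← sum_hot (fun t => x ^ (t % N + t / N)) (r.1 = N + i - 2) (N * i - 1)]
    refine Finset.sum_congr rfl fun c _ => ?_
    have hcond : (r.1 = N + i - 2 ∧ c.1 + 1 = N * i) ↔ (r.1 = N + i - 2 ∧ c.1 = N * i - 1) := by
      constructor <;> rintro ⟨h1, h2⟩ <;> exact ⟨h1, by omega⟩
    rw [if_congr hcond rfl rfl]
    split_ifs with h
    · rw [hv c, h.2]
    · rfl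
  rw [Finset.sum_congr rfl e1, Finset.sum_congr rfl e2]
  by_cases hrN : r.1 < N
  · rw [Finset.sum_eq_single_of_mem r.1 (Finset.mem_range.mpr hrN), Finset.sum_eq_zero]
    · have hlt : r.1 < N * m := lt_of_lt_of_le hrN (Nat.le_mul_of_pos_right N hm)
      rw [if_pos ⟨rfl, hlt⟩, Nat.mod_eq_of_lt hrN, Nat.div_eq_of_lt hrN, add_zero, add_zero]
    · intro i hi
      have hi2 : 2 ≤ i := (Finset.mem_Icc.mp hi).1
      rw [if_neg]
      rintro ⟨h1, -⟩
      omega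
    · intro i _ hne
      rw [if_neg]
      rintro ⟨h1, -⟩
      exact hne h1.symm
  · set i0 := r.1 - N + 2 with hi0
    have hi0m : i0 ∈ Finset.Icc 2 m := Finset.mem_Icc.mpr ⟨by omega, by omega⟩
    have hmul : N * (i0 - 1) + N = N * i0 := by
      have h11 : i0 - 1 + 1 = i0 := by omega
      conv_rhs => rw [← h11]
      rw [Nat.mul_add, Nat.mul_one]
    have hle : N * i0 ≤ N * m := Nat.mul_le_mul_left N (by omega)
    have hNi0 : 1 ≤ N * i0 := by omega
    have hdecomp : N * i0 - 1 = N * (i0 - 1) + (N - 1) := by omega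
    rw [Finset.sum_eq_zero, Finset.sum_eq_single_of_mem i0 hi0m]
    · rw [if_pos ⟨by omega, by omega⟩, hdecomp, Nat.mul_add_mod, Nat.mul_add_div (by omega),
        Nat.mod_eq_of_lt (by omega), Nat.div_eq_of_lt (by omega), add_zero, zero_add]
      congr 1
      omega
    · intro i hi hne
      have hi2 : 2 ≤ i := (Finset.mem_Icc.mp hi).1
      rw [if_neg]
      rintro ⟨h1, -⟩
      exact hne (by omega)
    · intro i hi
      have hiN := Finset.mem_range.mp hi
      rw [if_neg]
      rintro ⟨h1, -⟩
      omega

lemma blk_idx {a N M : ℕ} (i : Fin (a * N)) (q : Fin M) :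
    i.1 / N * M + q.1 < a * M := by
  have h1 : i.1 / N < a := div_lt_left i.2
  calc i.1 / N * M + q.1 < i.1 / N * M + M := Nat.add_lt_add_left q.2 _
    _ = (i.1 / N + 1) * M := by ring
    _ ≤ a * M := Nat.mul_le_mul_right M h1

lemma kron_one_mulVec {a N M : ℕ} (hM : 0 < M) (B : Matrix (Fin N) (Fin M) ℝ)
    (v : Fin (a * M) → ℝ) (i : Fin (a * N)) :
    (kron (1 : Matrix (Fin a) (Fin a) ℝ) B *ᵥ v) i
      = (B *ᵥ fun q : Fin M => v ⟨i.1 / N * M + q.1, blk_idx i q⟩)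
          ⟨i.1 % N, Nat.mod_lt _ (pos_right i.2)⟩ := by
  have expand : (kron (1 : Matrix (Fin a) (Fin a) ℝ) B *ᵥ v) i
      = ∑ pq : Fin a × Fin M,
          kron (1 : Matrix (Fin a) (Fin a) ℝ) B i (finProdFinEquiv pq) * v (finProdFinEquiv pq) := by
    rw [Matrix.mulVec, dotProduct]
    exact (Equiv.sum_comp finProdFinEquiv
      (fun j => kron (1 : Matrix (Fin a) (Fin a) ℝ) B i j * v j)).symm
  rw [expand, Fintype.sum_prod_type, Matrix.mulVec, dotProduct,
    Finset.sum_eq_single_of_mem (⟨i.1 / N, div_lt_left i.2⟩ : Fin a) (Finset.mem_univ _)]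
  · refine Finset.sum_congr rfl fun q _ => ?_
    have hfe : (finProdFinEquiv ((⟨i.1 / N, div_lt_left i.2⟩ : Fin a), q) : Fin (a * M))
        = ⟨i.1 / N * M + q.1, blk_idx i q⟩ := by
      apply Fin.ext
      show q.1 + M * (i.1 / N) = i.1 / N * M + q.1
      ring
    rw [hfe]
    show (1 : Matrix (Fin a) (Fin a) ℝ) ⟨i.1 / N, _⟩ ⟨(i.1 / N * M + q.1) / M, _⟩ *
        B ⟨i.1 % N, _⟩ ⟨(i.1 / N * M + q.1) % M, _⟩ * v _ = B ⟨i.1 % N, _⟩ q * v _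
    have hdiv : (i.1 / N * M + q.1) / M = i.1 / N := by
      rw [Nat.add_comm, Nat.add_mul_div_right _ _ hM, Nat.div_eq_of_lt q.2, Nat.zero_add]
    have hmod : (i.1 / N * M + q.1) % M = q.1 := by
      rw [Nat.add_comm, Nat.add_mul_mod_self_right, Nat.mod_eq_of_lt q.2]
    have hq : (⟨(i.1 / N * M + q.1) % M, Nat.mod_lt _ hM⟩ : Fin M) = q := Fin.ext hmod
    have hp : (⟨(i.1 / N * M + q.1) / M, div_lt_left (blk_idx i q)⟩ : Fin a)
        = ⟨i.1 / N, div_lt_left i.2⟩ := Fin.ext hdiv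
    rw [hq, hp, Matrix.one_apply_eq, one_mul]
  · intro p _ hp
    refine Finset.sum_eq_zero fun q _ => ?_
    have hval : (finProdFinEquiv (p, q) : Fin (a * M)).1 = q.1 + M * p.1 := rfl
    show (1 : Matrix (Fin a) (Fin a) ℝ) ⟨i.1 / N, _⟩
        ⟨(finProdFinEquiv (p, q) : Fin (a * M)).1 / M, _⟩ * B _ _ * v _ = 0
    have hdiv : (finProdFinEquiv (p, q) : Fin (a * M)).1 / M = p.1 := by
      rw [hval, Nat.add_mul_div_left _ _ hM, Nat.div_eq_of_lt q.2, Nat.zero_add]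
    have hp' : (⟨(finProdFinEquiv (p, q) : Fin (a * M)).1 / M,
        div_lt_left (finProdFinEquiv (p, q)).2⟩ : Fin a) = p := Fin.ext hdiv
    rw [hp', Matrix.one_apply_ne' hp, zero_mul, zero_mul]

lemma mulVec_cast {A B A' B' : ℕ} (h : A' = A) (h' : B' = B)
    (M : Matrix (Fin A) (Fin B) ℝ) (v : Fin B' → ℝ) (i : Fin A') :
    (M.submatrix (Fin.cast h) (Fin.cast h') *ᵥ v) i
      = (M *ᵥ fun j : Fin B => v (Fin.cast h'.symm j)) (Fin.cast h i) := by
  rw [Matrix.mulVec, Matrix.mulVec, dotProduct, dotProduct]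
  exact Fintype.sum_equiv (finCongr h') _ _ fun j => rfl

lemma mkronPow_row (n : ℕ) (x : ℝ) : ∀ (r : ℕ) (i : Fin (1 ^ r)) (j : Fin ((n + 1) ^ r)),
    mkronPow (rowOf (Hmon n x)) r i j = x ^ dsum n r j.1 := by
  intro r
  induction r with
  | zero => intro i j; simp [mkronPow, dsum]; rfl
  | succ r ih =>
    intro i j
    simp only [mkronPow, kron, Matrix.submatrix_apply, Matrix.of_apply, Fin.coe_cast]
    rw [ih]
    simp only [rowOf, Hmon, Matrix.of_apply]
    rw [← pow_add, dsum_succ]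
    congr 1
    omega

lemma vec_Xmat (n r : ℕ) (x : ℝ) (c : Fin ((n + 1) * (n + 1) ^ r)) :
    vec (Xmat n r x) c = x ^ dsum n (r + 1) c.1 := by
  have hmod : c.1 % (n + 1) < n + 1 := Nat.mod_lt _ (Nat.succ_pos n)
  simp only [vec, Xmat, kron, colOf, Hmon, Matrix.submatrix_apply, Matrix.of_apply,
    Fin.coe_cast, Nat.div_one, Nat.mod_one]
  rw [mkronPow_row, ← pow_add, Nat.mod_eq_of_lt hmod, dsum_succ]
  congr 1
  show dsum n r (c.1 / (n + 1)) + c.1 % (n + 1) = c.1 % (n + 1) + dsum n r (c.1 / (n + 1))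
  omega

lemma EL_apply (n : ℕ) (x : ℝ) : ∀ (k : ℕ) (v : Fin ((n + 1) ^ (k + 2)) → ℝ),
    (∀ j, v j = x ^ dsum n (k + 2) j.1) → ∀ i, (EL n k *ᵥ v) i = x ^ i.1 := by
  intro k
  induction k with
  | zero =>
    intro v hv i
    show ((Emat (n + 1) (n + 1)).submatrix (Fin.cast (arA n)) (Fin.cast (arB n)) *ᵥ v) i = _
    rw [mulVec_cast]
    refine Emat_hankel (by omega) (by omega) x _ (fun c => ?_) _
    rw [hv]
    congr 1
    rw [Fin.coe_cast, dsum_succ, dsum_succ]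
    have hdiv : c.1 / (n + 1) < n + 1 := div_lt_left c.2
    rw [Nat.mod_eq_of_lt hdiv]
    simp [dsum]
  | succ k ih =>
    intro v hv i
    set N := n * (k + 2) + 1 with hNdef
    set M := (n + 1) ^ (k + 2) with hMdef
    have hM : 0 < M := Nat.pow_pos (Nat.succ_pos n)
    show ((Emat N (n + 1) *
        (kron (1 : Matrix (Fin (n + 1)) (Fin (n + 1)) ℝ) (EL n k)).submatrix
          (Fin.cast (arC n k)) id).submatrix
        (Fin.cast (arD n k)) (Fin.cast (arE n k)) *ᵥ v) i = _
    rw [mulVec_cast, ← Matrix.mulVec_mulVec]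
    set v' : Fin ((n + 1) * M) → ℝ := fun j => v (Fin.cast (arE n k).symm j) with hv'def
    have hw : ∀ c : Fin (N * (n + 1)),
        (((kron (1 : Matrix (Fin (n + 1)) (Fin (n + 1)) ℝ) (EL n k)).submatrix
            (Fin.cast (arC n k)) id *ᵥ v') c) = x ^ (c.1 % N + c.1 / N) := by
      intro c
      have step1 : (((kron (1 : Matrix (Fin (n + 1)) (Fin (n + 1)) ℝ) (EL n k)).submatrix
            (Fin.cast (arC n k)) id *ᵥ v') c)
          = ((kron (1 : Matrix (Fin (n + 1)) (Fin (n + 1)) ℝ) (EL n k)) *ᵥ v')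
              (Fin.cast (arC n k) c) := rfl
      rw [step1, kron_one_mulVec hM]
      set c' := Fin.cast (arC n k) c with hc'
      set b := c'.1 / N with hb
      have hblt : b < n + 1 := div_lt_left c'.2
      have hvec : (fun q : Fin M => v' ⟨c'.1 / N * M + q.1, blk_idx c' q⟩)
          = x ^ b • (fun q : Fin M => x ^ dsum n (k + 2) q.1) := by
        funext q
        have hval : v' ⟨c'.1 / N * M + q.1, blk_idx c' q⟩
            = x ^ (b % (n + 1) + dsum n (k + 2) q.1) := by
          show v (Fin.cast (arE n k).symm ⟨c'.1 / N * M + q.1, blk_idx c' q⟩) = _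
          rw [hv]
          congr 1
          show dsum n (k + 2 + 1) (b * (n + 1) ^ (k + 2) + q.1) = _
          exact dsum_split n (k + 2) b q.1 q.2
        rw [hval, Nat.mod_eq_of_lt hblt]
        simp only [Pi.smul_apply, smul_eq_mul, ← pow_add]
      rw [hvec, Matrix.mulVec_smul]
      have := ih (fun q : Fin M => x ^ dsum n (k + 2) q.1) (fun j => rfl)
        ⟨c'.1 % N, Nat.mod_lt _ (pos_right c'.2)⟩
      rw [Pi.smul_apply, this, smul_eq_mul, ← pow_add]
      congr 1
      show c.1 / N + c.1 % N = c.1 % N + c.1 / N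
      omega
    have hfin := Emat_hankel (N := N) (m := n + 1) (by omega) (by omega) x _ hw
      (Fin.cast (arD n k) i)
    rw [hfin]
    rfl

/-- For every `n, m ≥ 1`, the `m`-th L-eliminating matrix
`E_{n+1}^{(m)} ∈ ℝ^{(n(m+1)+1)×(n+1)^{m+1}}`, defined by `E_{n+1}^{(1)} = E_{n+1,n+1}` and
`E_{n+1}^{(m)} = E_{nm+1,n+1}·(I_{n+1} ⊗ E_{n+1}^{(m-1)})` for `m ≥ 2`, satisfies
`E_{n+1}^{(m)} · vec(X_n^{(m)}(x)) = H_{n(m+1)}(x)` for every `x ∈ ℝ`. -/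
theorem stmt10 (n m : ℕ) (hn : 1 ≤ n) (hm : 1 ≤ m) (x : ℝ) :
    (EL n (m - 1) *ᵥ
        fun j : Fin ((n + 1) ^ (m - 1 + 2)) =>
          vec (Xmat n m x)
            (Fin.cast (by rw [show m - 1 + 2 = m + 1 from by omega]; ring) j))
      = fun i => Hmon (n * (m + 1)) x
          (Fin.cast (by rw [show m - 1 + 2 = m + 1 from by omega]) i) := by
  have h2 : m - 1 + 2 = m + 1 := by omega
  funext i
  refine EL_apply n x (m - 1) _ (fun j => ?_) i
  rw [vec_Xmat n m x, Fin.coe_cast]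
  exact congrArg (x ^ ·) (congrFun (congrArg (dsum n) h2.symm) j.1)

end Correlators
end

section
/- Let b₀, b₁, σ₀, σ₁, σ₂ ∈ ℝ, and for each m ≥ 2 let ξ₀^m,…,ξ_m^m ∈ ℝ. Let ℓ be a kernel assigning to each x ∈ ℝ a measure ℓ(x,·) on ℝ such that for every m ≥ 2 the function z ↦ z^m is ℓ(x,·)-integrable with ∫_ℝ z^m ℓ(x,dz) = Σ_{i=0}^m ξ_i^m x^i. Then for every n ≥ 2 and every x ∈ ℝ: (b₀+b₁x)·n x^{n-1} + ½(σ₀+σ₁x+σ₂x²)·n(n-1) x^{n-2} + ∫_ℝ ((x+z)^n − x^n − n x^{n-1} z) ℓ(x,dz) = c_n x^n + a_n^1 x^{n-1} + a_n^2 x^{n-2} + Σ_{i=3}^n a_n^i x^{n-i}, where a_n^1 = n b₀ + ½n(n-1)σ₁ + Σ_{k=2}^n C(n,k) ξ_{k-1}^k, a_n^2 = ½n(n-1)σ₀ + Σ_{k=2}^n C(n,k) ξ_{k-2}^k, a_n^i = Σ_{k=i}^n C(n,k) ξ_{k-i}^k for i = 3,…,n, and c_n = n b₁ + ½n(n-1)σ₂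 + Σ_{k=2}^n C(n,k) ξ_k^k. (This identifies the last row (a_n^n,…,a_n^1,c_n) of the generator matrix G_n of a polynomial jump-diffusion with respect to the monomial basis H_n(x) = (1,x,…,x^n)ᵀ.) -/
open Matrix MeasureTheory

namespace Correlators

/-- Action of the jump-diffusion generator on `x^n`: writing
`ξ m i` for `ξ_i^m`, if `∫ z^m ℓ(x,dz) = ∑_{i=0}^m ξ_i^m x^i` for all `m ≥ 2`, then for every
`n ≥ 2` and `x ∈ ℝ`,
`(b₀+b₁x)·n x^{n-1} + ½σ²(x)·n(n-1)x^{n-2} + ∫((x+z)^n − x^n − n x^{n-1}z) ℓ(x,dz)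
 = c_n x^n + a_n^1 x^{n-1} + a_n^2 x^{n-2} + ∑_{i=3}^n a_n^i x^{n-i}`
with the stated coefficients. -/
theorem stmt13 (b₀ b₁ σ₀ σ₁ σ₂ : ℝ) (ξ : ℕ → ℕ → ℝ) (ℓ : ℝ → Measure ℝ)
    (hint : ∀ (x : ℝ) (m : ℕ), 2 ≤ m → Integrable (fun z : ℝ => z ^ m) (ℓ x))
    (hmom : ∀ (x : ℝ) (m : ℕ), 2 ≤ m →
      ∫ z, z ^ m ∂(ℓ x) = ∑ i ∈ Finset.range (m + 1), ξ m i * x ^ i)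
    (n : ℕ) (hn : 2 ≤ n) (x : ℝ) :
    (b₀ + b₁ * x) * (n : ℝ) * x ^ (n - 1)
        + (1 / 2) * (σ₀ + σ₁ * x + σ₂ * x ^ 2) * ((n : ℝ) * ((n : ℝ) - 1)) * x ^ (n - 2)
        + ∫ z, ((x + z) ^ n - x ^ n - (n : ℝ) * x ^ (n - 1) * z) ∂(ℓ x)
      = ((n : ℝ) * b₁ + (1 / 2) * (n : ℝ) * ((n : ℝ) - 1) * σ₂
            + ∑ k ∈ Finset.Icc 2 n, (n.choose k : ℝ) * ξ k k) * x ^ n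
        + ((n : ℝ) * b₀ + (1 / 2) * (n : ℝ) * ((n : ℝ) - 1) * σ₁
            + ∑ k ∈ Finset.Icc 2 n, (n.choose k : ℝ) * ξ k (k - 1)) * x ^ (n - 1)
        + ((1 / 2) * (n : ℝ) * ((n : ℝ) - 1) * σ₀
            + ∑ k ∈ Finset.Icc 2 n, (n.choose k : ℝ) * ξ k (k - 2)) * x ^ (n - 2)
        + ∑ i ∈ Finset.Icc 3 n,
            (∑ k ∈ Finset.Icc i n, (n.choose k : ℝ) * ξ k (k - i)) * x ^ (n - i) := by
  -- binomial expansion of the integrand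
  have hset : Finset.range (n + 1) = insert 0 (insert 1 (Finset.Icc 2 n)) := by
    ext a; simp [Finset.mem_Icc]; omega
  have hbin : ∀ z : ℝ, (x + z) ^ n - x ^ n - (n : ℝ) * x ^ (n - 1) * z
      = ∑ k ∈ Finset.Icc 2 n, ((n.choose k : ℝ) * x ^ (n - k)) * z ^ k := by
    intro z
    have h := add_pow z x n
    rw [add_comm x z, h, hset, Finset.sum_insert (by simp), Finset.sum_insert (by simp)]
    simp only [pow_zero, pow_one, Nat.sub_zero, Nat.choose_zero_right, Nat.choose_one_right,
      Nat.cast_one, one_mul, mul_one]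
    rw [Finset.sum_congr rfl (fun k _ => by ring :
      ∀ k ∈ Finset.Icc 2 n, z ^ k * x ^ (n - k) * (n.choose k : ℝ)
        = ((n.choose k : ℝ) * x ^ (n - k)) * z ^ k)]
    ring
  have hInt : ∫ z, ((x + z) ^ n - x ^ n - (n : ℝ) * x ^ (n - 1) * z) ∂(ℓ x)
      = ∑ k ∈ Finset.Icc 2 n, ((n.choose k : ℝ) * x ^ (n - k)) * ∫ z, z ^ k ∂(ℓ x) := by
    simp_rw [hbin]
    rw [integral_finset_sum _ (fun k hk =>
      ((hint x k (Finset.mem_Icc.mp hk).1).const_mul _))]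
    exact Finset.sum_congr rfl fun k _ => integral_const_mul _ _
  rw [hInt, Finset.sum_congr rfl (fun k hk => by
    rw [hmom x k (Finset.mem_Icc.mp hk).1])]
  -- the key combinatorial identity
  have hsum : ∑ k ∈ Finset.Icc 2 n, ((n.choose k : ℝ) * x ^ (n - k)) *
        (∑ i ∈ Finset.range (k + 1), ξ k i * x ^ i)
      = (∑ k ∈ Finset.Icc 2 n, (n.choose k : ℝ) * ξ k k) * x ^ n
        + (∑ k ∈ Finset.Icc 2 n, (n.choose k : ℝ) * ξ k (k - 1)) * x ^ (n - 1)
        + (∑ k ∈ Finset.Icc 2 n, (n.choose k : ℝ) * ξ k (k - 2)) * x ^ (n - 2)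
        + ∑ i ∈ Finset.Icc 3 n,
            (∑ k ∈ Finset.Icc i n, (n.choose k : ℝ) * ξ k (k - i)) * x ^ (n - i) := by
    have step1 : ∀ k ∈ Finset.Icc 2 n,
        ((n.choose k : ℝ) * x ^ (n - k)) * (∑ i ∈ Finset.range (k + 1), ξ k i * x ^ i)
          = ∑ j ∈ Finset.range (n + 1),
              if j ≤ k then (n.choose k : ℝ) * ξ k (k - j) * x ^ (n - j) else 0 := by
      intro k hk
      obtain ⟨hk2, hkn⟩ := Finset.mem_Icc.mp hk
      have hrefl := (Finset.sum_range_reflect (fun i => ξ k i * x ^ i) (k + 1)).symm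
      simp only [Nat.add_sub_cancel] at hrefl
      rw [hrefl, Finset.mul_sum]
      rw [← Finset.sum_subset (Finset.range_subset_range.mpr (by omega : k + 1 ≤ n + 1))
        (fun j _ hj => by
          simp only [Finset.mem_range] at hj
          rw [if_neg (by omega)])]
      refine Finset.sum_congr rfl fun j hj => ?_
      simp only [Finset.mem_range] at hj
      rw [if_pos (by omega)]
      have hxp : x ^ (n - k) * x ^ (k - j) = x ^ (n - j) := by
        rw [← pow_add]; congr 1; omega
      calc (n.choose k : ℝ) * x ^ (n - k) * (ξ k (k - j) * x ^ (k - j))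
          = (n.choose k : ℝ) * ξ k (k - j) * (x ^ (n - k) * x ^ (k - j)) := by ring
        _ = (n.choose k : ℝ) * ξ k (k - j) * x ^ (n - j) := by rw [hxp]
    rw [Finset.sum_congr rfl step1, Finset.sum_comm]
    have step2 : ∀ j : ℕ, ∑ k ∈ Finset.Icc 2 n,
        (if j ≤ k then (n.choose k : ℝ) * ξ k (k - j) * x ^ (n - j) else 0)
          = (∑ k ∈ Finset.Icc (max 2 j) n, (n.choose k : ℝ) * ξ k (k - j)) * x ^ (n - j) := by
      intro j
      rw [Finset.sum_mul, ← Finset.sum_filter]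
      refine Finset.sum_congr ?_ fun k _ => rfl
      ext a; simp [Finset.mem_Icc]; omega
    rw [Finset.sum_congr rfl (fun j _ => step2 j)]
    have hset3 : Finset.range (n + 1)
        = insert 0 (insert 1 (insert 2 (Finset.Icc 3 n))) := by
      ext a; simp [Finset.mem_Icc]; omega
    rw [hset3, Finset.sum_insert (by simp), Finset.sum_insert (by simp [Finset.mem_Icc]),
      Finset.sum_insert (by simp [Finset.mem_Icc])]
    simp only [Nat.sub_zero, Nat.max_self, Nat.max_eq_left (by norm_num : (1:ℕ) ≤ 2)]
    have h0 : max 2 0 = 2 := rfl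
    rw [h0]
    have htail : ∑ j ∈ Finset.Icc 3 n,
        (∑ k ∈ Finset.Icc (max 2 j) n, (n.choose k : ℝ) * ξ k (k - j)) * x ^ (n - j)
        = ∑ j ∈ Finset.Icc 3 n,
            (∑ k ∈ Finset.Icc j n, (n.choose k : ℝ) * ξ k (k - j)) * x ^ (n - j) := by
      refine Finset.sum_congr rfl fun j hj => ?_
      have := (Finset.mem_Icc.mp hj).1
      rw [Nat.max_eq_right (by omega)]
    rw [htail]
    ring
  rw [hsum]
  have hx1 : x * x ^ (n - 1) = x ^ n := by
    rw [← pow_succ']; congr 1; omega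
  have hx2 : x ^ 2 * x ^ (n - 2) = x ^ n := by
    rw [← pow_add]; congr 1; omega
  have hx3 : x * x ^ (n - 2) = x ^ (n - 1) := by
    rw [← pow_succ']; congr 1; omega
  linear_combination ((n : ℝ) * b₁) * hx1 + ((1 / 2) * (n : ℝ) * ((n : ℝ) - 1) * σ₂) * hx2
    + ((1 / 2) * (n : ℝ) * ((n : ℝ) - 1) * σ₁) * hx3

end Correlators
end

section
/- Let n ≥ 1, let B ∈ ℝ^{n×n}, a ∈ ℝ^n and c ∈ ℝ, and assume the matrix Λ := c·I_n − B is invertible. Let G ∈ ℝ^{(n+1)×(n+1)} be the block lower-triangular matrix G = [[B, 0],[aᵀ, c]] (B in the top-left n×n block, the zero column vector top-right, the row vector aᵀ bottom-left, and the scalar c bottom-right). Then for every t ∈ ℝ, exp(t·G) = [[exp(t·B), 0],[aᵀ·Λ^{-1}·(e^{ct}·I_n − exp(t·B)), e^{ct}]]. -/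
open Matrix MeasureTheory

namespace Correlators

section Stmt15Aux

open Matrix

variable {n : ℕ}

/-- `Pmat B c k = ∑_{i<k} c^i • B^(k-1-i)`. -/
noncomputable def Pmat (B : Matrix (Fin n) (Fin n) ℝ) (c : ℝ) (k : ℕ) :
    Matrix (Fin n) (Fin n) ℝ :=
  ∑ i ∈ Finset.range k, c ^ i • B ^ (k - 1 - i)

lemma Pmat_succ (B : Matrix (Fin n) (Fin n) ℝ) (c : ℝ) (k : ℕ) :
    Pmat B c (k + 1) = Pmat B c k * B + c ^ k • 1 := by
  unfold Pmat
  rw [Finset.sum_range_succ, Finset.sum_mul]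
  congr 1
  · refine Finset.sum_congr rfl fun i hi => ?_
    have hik := Finset.mem_range.mp hi
    rw [smul_mul_assoc, ← pow_succ]
    congr 2
    omega
  · simp

lemma lam_mul_Pmat (B : Matrix (Fin n) (Fin n) ℝ) (c : ℝ) (k : ℕ) :
    (c • (1 : Matrix (Fin n) (Fin n) ℝ) - B) * Pmat B c k = c ^ k • 1 - B ^ k := by
  unfold Pmat
  rw [Finset.mul_sum]
  have h : ∀ i ∈ Finset.range k,
      (c • (1 : Matrix (Fin n) (Fin n) ℝ) - B) * (c ^ i • B ^ (k - 1 - i)) =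
        (fun i => c ^ i • B ^ (k - i)) (i + 1) - (fun i => c ^ i • B ^ (k - i)) i := by
    intro i hi
    have hik := Finset.mem_range.mp hi
    simp only
    rw [sub_mul, smul_mul_assoc, one_mul, mul_smul_comm, smul_smul, ← pow_succ',
      ← pow_succ', show k - 1 - i + 1 = k - i from by omega,
      show k - 1 - i = k - (i + 1) from by omega]
  rw [Finset.sum_congr rfl h, Finset.sum_range_sub (f := fun i => c ^ i • B ^ (k - i))]
  simp

lemma G_pow (B : Matrix (Fin n) (Fin n) ℝ) (A : Matrix (Fin 1) (Fin n) ℝ) (c : ℝ) (k : ℕ) :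
    (fromBlocks B 0 A (c • (1 : Matrix (Fin 1) (Fin 1) ℝ))) ^ k =
      fromBlocks (B ^ k) 0 (A * Pmat B c k) (c ^ k • 1) := by
  induction k with
  | zero => simp [Pmat, ← fromBlocks_one]
  | succ k ih =>
      rw [pow_succ, ih, fromBlocks_multiply, Pmat_succ]
      simp [Matrix.mul_add, Matrix.mul_assoc, Matrix.mul_smul, smul_mul_assoc,
        smul_smul, pow_succ, mul_comm]

lemma matrix_exp_hasSum (m : Type*) [Fintype m] [DecidableEq m] (x : Matrix m m ℝ) :
    HasSum (fun k : ℕ => ((Nat.factorial k : ℝ)⁻¹) • x ^ k) (NormedSpace.exp x) := by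
  letI : SeminormedRing (Matrix m m ℝ) := Matrix.linftyOpSemiNormedRing
  letI : NormedRing (Matrix m m ℝ) := Matrix.linftyOpNormedRing
  letI : NormedAlgebra ℝ (Matrix m m ℝ) := Matrix.linftyOpNormedAlgebra
  exact NormedSpace.exp_series_hasSum_exp' x

lemma hasSum_fromBlocks {ι p q r s : Type*}
    {f₁ : ι → Matrix p r ℝ} {f₂ : ι → Matrix p s ℝ} {f₃ : ι → Matrix q r ℝ}
    {f₄ : ι → Matrix q s ℝ} {S₁ : Matrix p r ℝ} {S₂ : Matrix p s ℝ} {S₃ : Matrix q r ℝ}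
    {S₄ : Matrix q s ℝ} (h₁ : HasSum f₁ S₁) (h₂ : HasSum f₂ S₂) (h₃ : HasSum f₃ S₃)
    (h₄ : HasSum f₄ S₄) :
    HasSum (fun k => Matrix.fromBlocks (f₁ k) (f₂ k) (f₃ k) (f₄ k))
      (Matrix.fromBlocks S₁ S₂ S₃ S₄) := by
  refine Pi.hasSum.mpr fun i => Pi.hasSum.mpr fun j => ?_
  cases i with
  | inl i =>
      cases j with
      | inl j => exact Pi.hasSum.mp (Pi.hasSum.mp h₁ i) j
      | inr j => exact Pi.hasSum.mp (Pi.hasSum.mp h₂ i) j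
  | inr i =>
      cases j with
      | inl j => exact Pi.hasSum.mp (Pi.hasSum.mp h₃ i) j
      | inr j => exact Pi.hasSum.mp (Pi.hasSum.mp h₄ i) j

end Stmt15Aux

/-- Let `n ≥ 1`, `B ∈ ℝ^{n×n}`, `a ∈ ℝ^n`, `c ∈ ℝ`, and assume
`Λ := c·I_n − B` is invertible. For the block lower-triangular matrix `G = [[B, 0],[aᵀ, c]]`,
for every `t ∈ ℝ`,
`exp(t·G) = [[exp(t·B), 0],[aᵀ·Λ⁻¹·(e^{ct}·I_n − exp(t·B)), e^{ct}]]`. -/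
theorem stmt15 (n : ℕ) (hn : 1 ≤ n) (B : Matrix (Fin n) (Fin n) ℝ) (a : Fin n → ℝ) (c : ℝ)
    (hΛ : IsUnit (c • (1 : Matrix (Fin n) (Fin n) ℝ) - B)) (t : ℝ) :
    NormedSpace.exp
        (t • Matrix.fromBlocks B 0
          (Matrix.of fun (_ : Fin 1) j => a j) (Matrix.of fun (_ _ : Fin 1) => c))
      = Matrix.fromBlocks (NormedSpace.exp (t • B)) 0
          (Matrix.of fun (_ : Fin 1) j =>
            Matrix.vecMul a
              ((c • (1 : Matrix (Fin n) (Fin n) ℝ) - B)⁻¹ *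
                (Real.exp (c * t) • (1 : Matrix (Fin n) (Fin n) ℝ)
                  - NormedSpace.exp (t • B))) j)
          (Matrix.of fun (_ _ : Fin 1) => Real.exp (c * t)) := by
  classical
  set A : Matrix (Fin 1) (Fin n) ℝ := Matrix.of fun _ j => a j with hA
  set Λi : Matrix (Fin n) (Fin n) ℝ := (c • (1 : Matrix (Fin n) (Fin n) ℝ) - B)⁻¹ with hΛi
  have hcmat : (Matrix.of fun (_ _ : Fin 1) => c) = c • (1 : Matrix (Fin 1) (Fin 1) ℝ) := by
    ext i j
    simp [Subsingleton.elim i j, Matrix.one_apply]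
  have hexpmat : (Matrix.of fun (_ _ : Fin 1) => Real.exp (c * t))
      = Real.exp (c * t) • (1 : Matrix (Fin 1) (Fin 1) ℝ) := by
    ext i j
    simp [Subsingleton.elim i j, Matrix.one_apply]
  have hΛd : IsUnit (c • (1 : Matrix (Fin n) (Fin n) ℝ) - B).det :=
    (Matrix.isUnit_iff_isUnit_det _).mp hΛ
  have hPm : ∀ k : ℕ, Pmat B c k = Λi * (c ^ k • 1 - B ^ k) := by
    intro k
    rw [← lam_mul_Pmat B c k, hΛi, ← Matrix.mul_assoc, Matrix.nonsing_inv_mul _ hΛd,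
      Matrix.one_mul]
  -- the four blockwise sums
  have h11 : HasSum (fun k : ℕ => ((Nat.factorial k : ℝ)⁻¹ * t ^ k) • B ^ k)
      (NormedSpace.exp (t • B)) := by
    have h := matrix_exp_hasSum (Fin n) (t • B)
    simpa only [smul_pow, smul_smul] using h
  have hexpr : HasSum (fun k : ℕ => (Nat.factorial k : ℝ)⁻¹ * (c * t) ^ k) (Real.exp (c * t)) := by
    have h := NormedSpace.exp_series_hasSum_exp' (𝕂 := ℝ) (c * t)
    rw [Real.exp_eq_exp_ℝ]
    simpa only [smul_eq_mul] using h
  have hone : ∀ (m : Type) [Fintype m] [DecidableEq m],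
      HasSum (fun k : ℕ => ((Nat.factorial k : ℝ)⁻¹ * t ^ k * c ^ k) • (1 : Matrix m m ℝ))
        (Real.exp (c * t) • (1 : Matrix m m ℝ)) := by
    intro m _ _
    have h := hexpr.smul_const (1 : Matrix m m ℝ)
    have he : (fun k : ℕ => ((Nat.factorial k : ℝ)⁻¹ * t ^ k * c ^ k) • (1 : Matrix m m ℝ))
        = fun k : ℕ => ((Nat.factorial k : ℝ)⁻¹ * (c * t) ^ k) • (1 : Matrix m m ℝ) := by
      funext k
      rw [mul_pow]
      ring_nf
    rw [he]
    exact h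
  have hbase : HasSum
      (fun k : ℕ => ((Nat.factorial k : ℝ)⁻¹ * t ^ k) • (c ^ k • (1 : Matrix (Fin n) (Fin n) ℝ) - B ^ k))
      (Real.exp (c * t) • (1 : Matrix (Fin n) (Fin n) ℝ) - NormedSpace.exp (t • B)) := by
    have h := (hone (Fin n)).sub h11
    have he : (fun k : ℕ =>
        ((Nat.factorial k : ℝ)⁻¹ * t ^ k) • (c ^ k • (1 : Matrix (Fin n) (Fin n) ℝ) - B ^ k))
        = fun k : ℕ => ((Nat.factorial k : ℝ)⁻¹ * t ^ k * c ^ k) • (1 : Matrix (Fin n) (Fin n) ℝ)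
            - ((Nat.factorial k : ℝ)⁻¹ * t ^ k) • B ^ k := by
      funext k
      rw [smul_sub, smul_smul]
    rw [he]
    exact h
  have h21 : HasSum (fun k : ℕ => ((Nat.factorial k : ℝ)⁻¹ * t ^ k) • (A * Pmat B c k))
      (A * (Λi * (Real.exp (c * t) • (1 : Matrix (Fin n) (Fin n) ℝ)
        - NormedSpace.exp (t • B)))) := by
    have hcont : Continuous fun M : Matrix (Fin n) (Fin n) ℝ => A * (Λi * M) :=
      continuous_const.matrix_mul (continuous_const.matrix_mul continuous_id)
    have hmap := hbase.map
      (AddMonoidHom.mk' (fun M : Matrix (Fin n) (Fin n) ℝ => A * (Λi * M))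
        (fun M N => by simp [Matrix.mul_add])) hcont
    have he : (fun k : ℕ => ((Nat.factorial k : ℝ)⁻¹ * t ^ k) • (A * Pmat B c k))
        = fun k : ℕ => A * (Λi *
            (((Nat.factorial k : ℝ)⁻¹ * t ^ k) • (c ^ k • (1 : Matrix (Fin n) (Fin n) ℝ) - B ^ k))) := by
      funext k
      simp [hPm k, Matrix.mul_smul]
    rw [he]
    exact hmap
  have hzero : HasSum (fun _ : ℕ => (0 : Matrix (Fin n) (Fin 1) ℝ)) 0 := hasSum_zero
  -- the sum for the big matrix
  have hG := matrix_exp_hasSum (Fin n ⊕ Fin 1)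
    (t • Matrix.fromBlocks B 0 A (c • (1 : Matrix (Fin 1) (Fin 1) ℝ)))
  have hfun : (fun k : ℕ => ((Nat.factorial k : ℝ)⁻¹) •
        (t • Matrix.fromBlocks B 0 A (c • (1 : Matrix (Fin 1) (Fin 1) ℝ))) ^ k)
      = fun k : ℕ => Matrix.fromBlocks (((Nat.factorial k : ℝ)⁻¹ * t ^ k) • B ^ k) 0
          (((Nat.factorial k : ℝ)⁻¹ * t ^ k) • (A * Pmat B c k))
          (((Nat.factorial k : ℝ)⁻¹ * t ^ k * c ^ k) • (1 : Matrix (Fin 1) (Fin 1) ℝ)) := by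
    funext k
    rw [smul_pow, smul_smul, G_pow, Matrix.fromBlocks_smul, smul_zero, smul_smul]
  rw [hfun] at hG
  have hS21 : (Matrix.of fun (_ : Fin 1) j =>
      Matrix.vecMul a (Λi * (Real.exp (c * t) • (1 : Matrix (Fin n) (Fin n) ℝ)
        - NormedSpace.exp (t • B))) j)
      = A * (Λi * (Real.exp (c * t) • (1 : Matrix (Fin n) (Fin n) ℝ)
        - NormedSpace.exp (t • B))) := by
    ext i j
    simp [hA, Matrix.mul_apply, Matrix.vecMul, dotProduct]
  rw [hcmat, hexpmat, hS21]
  exact hG.unique (hasSum_fromBlocks h11 hzero h21 (hone (Fin 1)))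

end Correlators
end

section
/- For every n ≥ 1, m ≥ 1, every vector v ∈ ℝ^{n+1}, every matrix M ∈ ℝ^{(n+1)^m×(n+1)^m}, and every x ∈ ℝ, the identity holds: H_n(x)·vᵀ · vec^{-1}(M · vec(X_n^{(m-1)}(x))) = X_n^{(m)}(x) · Mᵀ · (I_{n+1} ⊗^{m-1} v), where vec^{-1} : ℝ^{(n+1)^m} → ℝ^{(n+1)×(n+1)^{m-1}} is the inverse of the vectorization on (n+1)×(n+1)^{m-1} matrices, and I_{n+1} ⊗^{m-1} v := I_{n+1}^{⊗(m-1)} ⊗ v for m ≥ 2 and := v for m = 1. -/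
open Matrix MeasureTheory

namespace Correlators

lemma fin_one_pow_val {r : ℕ} (i : Fin (1 ^ r)) : i.1 = 0 := by
  have h : i.1 < 1 := lt_of_lt_of_le i.2 (le_of_eq (one_pow r))
  omega

lemma mkronPow_one_apply (n r : ℕ) (p q : Fin ((n + 1) ^ r)) :
    mkronPow (1 : Matrix (Fin (n + 1)) (Fin (n + 1)) ℝ) r p q
      = if p = q then 1 else 0 := by
  induction r with
  | zero =>
      have hp1 : p.1 < 1 := lt_of_lt_of_le p.2 (le_of_eq (pow_zero _))
      have hq1 : q.1 < 1 := lt_of_lt_of_le q.2 (le_of_eq (pow_zero _))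
      have hp : p = q := Fin.ext (by omega)
      rw [if_pos hp]; rfl
  | succ r ih =>
      rw [mkronPow]
      simp only [Matrix.submatrix_apply, kron, Matrix.of_apply, Fin.coe_cast]
      rw [ih, Matrix.one_apply]
      simp only [Fin.ext_iff]
      have hiff : p.1 = q.1 ↔
          (p.1 / (n + 1) = q.1 / (n + 1) ∧ p.1 % (n + 1) = q.1 % (n + 1)) := by
        constructor
        · intro h; rw [h]; exact ⟨rfl, rfl⟩
        · rintro ⟨h1, h2⟩
          rw [← Nat.div_add_mod p.1 (n + 1), ← Nat.div_add_mod q.1 (n + 1), h1, h2]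
      by_cases h1 : p.1 / (n + 1) = q.1 / (n + 1) <;>
        by_cases h2 : p.1 % (n + 1) = q.1 % (n + 1) <;>
        simp [h1, h2, hiff]

/-- the single row of `mkronPow (rowOf u) r`. -/
def Qrow (n : ℕ) (x : ℝ) (r : ℕ) (j : Fin ((n + 1) ^ r)) : ℝ :=
  mkronPow (rowOf (Hmon n x)) r ⟨0, by simp⟩ j

lemma mkronPow_row_fst {N r : ℕ} (u : Fin N → ℝ) (i i' : Fin (1 ^ r)) (j : Fin (N ^ r)) :
    mkronPow (rowOf u) r i j = mkronPow (rowOf u) r i' j := by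
  congr 1
  exact Fin.ext (by rw [fin_one_pow_val, fin_one_pow_val])

lemma divpow_lt {n r : ℕ} (l : Fin ((n + 1) ^ (r + 1))) : l.1 / (n + 1) < (n + 1) ^ r :=
  Nat.div_lt_of_lt_mul (lt_of_lt_of_le l.2 (le_of_eq (pow_succ' _ _)))

lemma idx_lt {n r : ℕ} (a : Fin (n + 1)) (jj : Fin ((n + 1) ^ r)) :
    a.1 + (n + 1) * jj.1 < (n + 1) ^ (r + 1) := by
  have h1 : a.1 + (n + 1) * jj.1 < (n + 1) * (jj.1 + 1) := by
    rw [Nat.mul_succ]; have := a.2; omega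
  have h2 : (n + 1) * (jj.1 + 1) ≤ (n + 1) * (n + 1) ^ r :=
    Nat.mul_le_mul_left _ jj.2
  calc a.1 + (n + 1) * jj.1 < (n + 1) * (jj.1 + 1) := h1
    _ ≤ (n + 1) * (n + 1) ^ r := h2
    _ = (n + 1) ^ (r + 1) := (pow_succ' _ _).symm

lemma Qrow_succ (n : ℕ) (x : ℝ) (r : ℕ) (j : Fin ((n + 1) ^ (r + 1))) :
    Qrow n x (r + 1) j
      = Qrow n x r ⟨j.1 / (n + 1), divpow_lt j⟩ * x ^ (j.1 % (n + 1)) := by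
  show (kron (mkronPow (rowOf (Hmon n x)) r) (rowOf (Hmon n x))).submatrix _ _ _ _ = _
  simp only [Matrix.submatrix_apply, kron, Matrix.of_apply, Fin.coe_cast]
  rw [mkronPow_row_fst (Hmon n x) _ (⟨0, by simp⟩ : Fin (1 ^ r))]
  rfl

lemma Xmat_apply (n r : ℕ) (x : ℝ) (i : Fin (n + 1)) (j : Fin ((n + 1) ^ r)) :
    Xmat n r x i j = x ^ (i : ℕ) * Qrow n x r j := by
  show (kron (mkronPow (rowOf (Hmon n x)) r) (colOf (Hmon n x))) _ _ = _
  simp only [kron, Matrix.of_apply, Fin.coe_cast]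
  rw [mkronPow_row_fst (Hmon n x) _ (⟨0, by simp⟩ : Fin (1 ^ r)), mul_comm]
  congr 1
  · show x ^ (i.1 % (n + 1)) = x ^ (i.1 : ℕ)
    rw [Nat.mod_eq_of_lt i.2]
  · unfold Qrow
    congr 1
    exact Fin.ext (Nat.div_one _)
noncomputable def Tmat (n r : ℕ) (x : ℝ) (v : Fin (n + 1) → ℝ)
    (M : Matrix (Fin ((n + 1) ^ (r + 1))) (Fin ((n + 1) ^ (r + 1))) ℝ) :
    Matrix (Fin (n + 1)) (Fin ((n + 1) ^ r)) ℝ :=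
  Matrix.of fun i j =>
    ∑ a : Fin (n + 1), ∑ l : Fin ((n + 1) ^ (r + 1)),
      x ^ (i : ℕ) * v a * M ⟨a.1 + (n + 1) * j.1, idx_lt a j⟩ l *
        (x ^ (l.1 % (n + 1)) * Qrow n x r ⟨l.1 / (n + 1), divpow_lt l⟩)

lemma lhs_entry (n r : ℕ) (v : Fin (n + 1) → ℝ)
    (M : Matrix (Fin ((n + 1) ^ (r + 1))) (Fin ((n + 1) ^ (r + 1))) ℝ) (x : ℝ)
    (h1 : (n + 1) ^ (r + 1) = (n + 1) * (n + 1) ^ r) :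
    Matrix.vecMulVec (Hmon n x) v *
        unvec (fun j : Fin ((n + 1) * (n + 1) ^ r) =>
          (M *ᵥ fun l : Fin ((n + 1) ^ (r + 1)) =>
              vec (Xmat n r x) (Fin.cast h1 l)) (Fin.cast h1.symm j))
      = Tmat n r x v M := by
  ext i j
  simp only [Matrix.mul_apply, Matrix.vecMulVec_apply, unvec, Matrix.of_apply, Tmat,
    Matrix.mulVec, dotProduct, vec, Fin.coe_cast, Fin.cast_mk, Xmat_apply]
  refine Finset.sum_congr rfl fun a _ => ?_
  rw [Finset.mul_sum]
  refine Finset.sum_congr rfl fun l _ => ?_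
  have hval : j.1 * (n + 1) + a.1 = a.1 + (n + 1) * j.1 := by ring
  simp only [hval, Hmon]
  ring

lemma rhs_entry (n r : ℕ) (v : Fin (n + 1) → ℝ)
    (M : Matrix (Fin ((n + 1) ^ (r + 1))) (Fin ((n + 1) ^ (r + 1))) ℝ) (x : ℝ)
    (h2 : (n + 1) ^ (r + 1) = (n + 1) ^ r * (n + 1))
    (h3 : (n + 1) ^ r = (n + 1) ^ r * 1) :
    Xmat n (r + 1) x * Mᵀ *
        ((kron (mkronPow (1 : Matrix (Fin (n + 1)) (Fin (n + 1)) ℝ) r) (colOf v)).submatrix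
          (Fin.cast h2) (Fin.cast h3))
      = Tmat n r x v M := by
  ext i j
  simp only [Matrix.mul_apply, Matrix.submatrix_apply, Matrix.transpose_apply, kron,
    Matrix.of_apply, Fin.coe_cast, Tmat, colOf, mkronPow_one_apply]
  rw [← Equiv.sum_comp (finProdFinEquiv.trans (finCongr h2.symm) :
        Fin ((n + 1) ^ r) × Fin (n + 1) ≃ Fin ((n + 1) ^ (r + 1)))]
  rw [Fintype.sum_prod_type]
  have he : ∀ (jj : Fin ((n + 1) ^ r)) (a : Fin (n + 1)),
      (finProdFinEquiv.trans (finCongr h2.symm)) (jj, a)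
        = (⟨a.1 + (n + 1) * jj.1, idx_lt a jj⟩ : Fin ((n + 1) ^ (r + 1))) := by
    intro jj a
    apply Fin.ext
    simp only [Equiv.trans_apply, finCongr_apply, Fin.coe_cast]
    rfl
  have hd : ∀ (a : Fin (n + 1)) (jj : Fin ((n + 1) ^ r)),
      (a.1 + (n + 1) * jj.1) / (n + 1) = jj.1 := by
    intro a jj
    rw [Nat.add_mul_div_left _ _ (Nat.succ_pos n), Nat.div_eq_of_lt a.2, Nat.zero_add]
  have hmod : ∀ (a : Fin (n + 1)) (jj : Fin ((n + 1) ^ r)),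
      (a.1 + (n + 1) * jj.1) % (n + 1) = a.1 := by
    intro a jj
    rw [Nat.add_mul_mod_self_left, Nat.mod_eq_of_lt a.2]
  simp only [he, Fin.val_mk, hd, hmod, Nat.div_one, Fin.eta]
  rw [Finset.sum_eq_single_of_mem j (Finset.mem_univ j) (fun b _ hb => by simp [hb])]
  simp only [if_true, eq_self_iff_true, one_mul]
  refine Finset.sum_congr rfl fun a _ => ?_
  rw [Finset.sum_mul]
  refine Finset.sum_congr rfl fun l _ => ?_
  rw [Xmat_apply, Qrow_succ]
  ring
/-- For every `n ≥ 1`, `m ≥ 1`, every `v ∈ ℝ^{n+1}`, every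
`M ∈ ℝ^{(n+1)^m×(n+1)^m}` and every `x ∈ ℝ`:
`H_n(x)·vᵀ · vec⁻¹(M · vec(X_n^{(m-1)}(x))) = X_n^{(m)}(x) · Mᵀ · (I_{n+1} ⊗^{m-1} v)`,
where `I_{n+1} ⊗^{m-1} v = I_{n+1}^{⊗(m-1)} ⊗ v` (and `= v` for `m = 1`). -/
theorem stmt19 (n m : ℕ) (hn : 1 ≤ n) (hm : 1 ≤ m) (v : Fin (n + 1) → ℝ)
    (M : Matrix (Fin ((n + 1) ^ m)) (Fin ((n + 1) ^ m)) ℝ) (x : ℝ) :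
    Matrix.vecMulVec (Hmon n x) v *
        unvec (fun j : Fin ((n + 1) * (n + 1) ^ (m - 1)) =>
          (M *ᵥ fun l : Fin ((n + 1) ^ m) =>
              vec (Xmat n (m - 1) x)
                (Fin.cast (by rw [← pow_succ', Nat.sub_add_cancel hm]) l))
            (Fin.cast (Eq.symm (by rw [← pow_succ', Nat.sub_add_cancel hm])) j))
      = Xmat n m x * Mᵀ *
          ((kron (mkronPow (1 : Matrix (Fin (n + 1)) (Fin (n + 1)) ℝ) (m - 1))
              (colOf v)).submatrix
            (Fin.cast (by rw [← pow_succ, Nat.sub_add_cancel hm]))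
            (Fin.cast (mul_one ((n + 1) ^ (m - 1))).symm)) := by
  obtain ⟨r, rfl⟩ : ∃ r, m = r + 1 := ⟨m - 1, by omega⟩
  exact (lhs_entry n r v M x (pow_succ' _ _)).trans
    (rhs_entry n r v M x (pow_succ _ _) (mul_one _).symm).symm

end Correlators
end
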